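/- arXiv:1812.01310 — 2 statements merged into one kernel-verified Lean document; each statement's English description precedes it below -/
import Mathlib

section
/- Let M be an m×n integer matrix, let s_n be an involutive permutation of {1,…,n} and s_m an involutive permutation of {1,…,m} such that M_{s_m(a), s_n(j)} = M_{a,j} for all a, j. Let c ∈ ℝ^m have all entries nonzero, let ε ∈ {1,−1}^m satisfy ε_{s_m(a)} = ε_a for all a, and set c̃_a = ε_a · c_{s_m(a)}. Let k ∈ ℝ and let δ ∈ {0,1}^n satisfy δ_{s_n(j)} = δ_j for all j. Then the following are equivalent. (a) There exists g ∈ ℝ^n with all entries nonzero, with g_{s_n(j)} = g_j and sign(g_j) = (−1)^{δ_j} for all j, such that the vector X ∈ ℝ^m with entries X_a = c_a · c̃_a · ∏_{j=1}^n g_j^{M_{aj}} satisfies Mᵀ X = (k, …, k). (b) There exists X ∈ ℝ^m with X_{s_m(a)} = X_a for all a, such that: (K) Mᵀ X = (k, …, k); (H) every entry of X is nonzero; (L_σ) sign(X_a) · sign(c_a) · sign(c̃_a) = (−1)^{Σ_j M_{aj} δ_j} for every a; (P_σ) for every α ∈ ℝ^m with Mᵀ α = 0 and α_{s_m(a)}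 = α_a for all a, ∏_a |X_a|^{α_a} = ∏_a |c_a|^{2 α_a}. -/
/-!
Writing `g j = (-1) ^ δ j * exp (t j)`, the monomial `∏ j, g j ^ M a j` becomes
`(-1) ^ (M δ) a * exp ((M t) a)`, so (a) asks for an `sn`-invariant `t` such that
`X = c c̃ (-1) ^ (M δ) exp (M t)` solves `Mᵀ X = k`. An `sm`-invariant nowhere-zero `X` satisfying
(L_σ) has this form iff `log |X| - log |c c̃|` is `M t` for an invariant `t`; averaging over the
involutions, this holds iff that vector is orthogonal to the invariant part of `ker Mᵀ`, which is
(P_σ) because `|c̃ a| = |c (sm a)|`.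
-/

open Function Matrix Finset Real

namespace Real

theorem sign_mul (x y : ℝ) : sign (x * y) = sign x * sign y := by
  rcases lt_trichotomy x 0 with hx | rfl | hx <;> rcases lt_trichotomy y 0 with hy | rfl | hy <;>
    simp [sign_of_neg, sign_of_pos, mul_pos_of_neg_of_neg, mul_neg_of_neg_of_pos,
      mul_neg_of_pos_of_neg, *]

theorem sign_mul_abs (x : ℝ) : sign x * |x| = x := by
  rcases lt_trichotomy x 0 with hx | rfl | hx
  · simp [sign_of_neg hx, abs_of_neg hx]
  · simp
  · simp [sign_of_pos hx, abs_of_pos hx]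

theorem sign_mul_self_of_ne_zero {x : ℝ} (hx : x ≠ 0) : sign x * sign x = 1 := by
  rcases sign_apply_eq_of_ne_zero x hx with h | h <;> simp [h]

theorem sign_neg_one_zpow_mul_exp (d : ℤ) (s : ℝ) : sign ((-1) ^ d * exp s) = (-1) ^ d := by
  rcases Int.even_or_odd d with h | h <;> simp [h.neg_one_zpow, sign_neg, sign_of_pos (exp_pos s)]

theorem neg_one_zpow_mul_exp_log {x : ℝ} {d : ℤ} (hx : x ≠ 0) (h : sign x = (-1) ^ d) :
    (-1) ^ d * exp (log x) = x := by
  rw [← h, exp_log_eq_abs hx, sign_mul_abs]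

theorem eq_mul_neg_one_zpow_mul_exp_iff {x y s : ℝ} {d : ℤ} (hy : y ≠ 0) :
    x = y * ((-1) ^ d * exp s) ↔ x ≠ 0 ∧ sign x * sign y = (-1) ^ d ∧ log x = log y + s := by
  have hd : ((-1 : ℝ) ^ d) ≠ 0 := zpow_ne_zero _ (by norm_num)
  constructor
  · rintro rfl
    refine ⟨mul_ne_zero hy (mul_ne_zero hd (exp_ne_zero s)), ?_, ?_⟩
    · rw [sign_mul, sign_neg_one_zpow_mul_exp, mul_right_comm, sign_mul_self_of_ne_zero hy,
        one_mul]
    · rw [log_mul hy (mul_ne_zero hd (exp_ne_zero s)), log_mul hd (exp_ne_zero s), log_exp,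
        log_zpow, log_neg_eq_log, log_one, mul_zero, zero_add]
  · rintro ⟨hx, hsign, hlog⟩
    have hsx : sign x = sign y * (-1) ^ d := by
      rw [← hsign, mul_left_comm, sign_mul_self_of_ne_zero hy, mul_one]
    calc x = sign x * exp (log x) := by rw [exp_log_eq_abs hx, sign_mul_abs]
      _ = (sign y * |y|) * ((-1) ^ d * exp s) := by
        rw [hsx, hlog, exp_add, exp_log_eq_abs hy]; ring
      _ = y * ((-1) ^ d * exp s) := by rw [sign_mul_abs]

theorem prod_abs_rpow_eq_exp_dotProduct {ι : Type*} [Fintype ι] {x : ι → ℝ} (hx : ∀ a, x a ≠ 0)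
    (α : ι → ℝ) : ∏ a, |x a| ^ α a = exp (α ⬝ᵥ fun a => log (x a)) := by
  rw [dotProduct, exp_sum]
  refine prod_congr rfl fun a _ => ?_
  rw [rpow_def_of_pos (abs_pos.2 (hx a)), log_abs, mul_comm]

end Real

theorem Finset.prod_zpow_eq_zpow_sum₀ {ι G₀ : Type*} [CommGroupWithZero G₀] {x : G₀} (hx : x ≠ 0)
    (s : Finset ι) (e : ι → ℤ) : ∏ i ∈ s, x ^ e i = x ^ ∑ i ∈ s, e i := by
  classical
  induction s using Finset.cons_induction with
  | empty => simp
  | cons a s ha ih => rw [prod_cons, sum_cons, ih, zpow_add₀ hx]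

theorem prod_neg_one_zpow_mul_exp_zpow {ι κ : Type*} [Fintype κ] (M : Matrix ι κ ℤ) (δ : κ → ℤ)
    (t : κ → ℝ) (a : ι) :
    ∏ j, ((-1 : ℝ) ^ δ j * exp (t j)) ^ M a j
      = (-1) ^ (M *ᵥ δ) a * exp ((M.map (↑) *ᵥ t) a) := by
  calc ∏ j, ((-1 : ℝ) ^ δ j * exp (t j)) ^ M a j
      = ∏ j, ((-1 : ℝ) ^ (M a j * δ j) * exp (M a j * t j)) := prod_congr rfl fun j _ => by
        rw [mul_zpow, ← _root_.zpow_mul, mul_comm (δ j), ← rpow_intCast (exp (t j)), ← exp_mul,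
          mul_comm (t j)]
    _ = (-1) ^ (M *ᵥ δ) a * exp ((M.map (↑) *ᵥ t) a) := by
        rw [prod_mul_distrib, prod_zpow_eq_zpow_sum₀ (by norm_num), ← exp_sum]
        rfl

namespace Matrix

variable {K ι κ : Type*} [Fintype κ] {σ : ι → ι} {τ : κ → κ}

theorem mulVec_comp_of_involutive [NonUnitalNonAssocSemiring K] {A : Matrix ι κ K}
    (hσ : Involutive σ) (hτ : Involutive τ) (hA : ∀ a j, A (σ a) (τ j) = A a j) (t : κ → K) :
    A *ᵥ (t ∘ τ) = (A *ᵥ t) ∘ σ := by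
  ext a
  simp only [mulVec, dotProduct]
  rw [← hτ.bijective.sum_comp]
  refine sum_congr rfl fun j _ => ?_
  simp [hτ j, ← hA (σ a) j, hσ a]

variable [Fintype ι] [Field K]

theorem exists_mulVec_eq_iff (A : Matrix ι κ K) (b : ι → K) :
    (∃ t, A *ᵥ t = b) ↔ ∀ α, α ᵥ* A = 0 → α ⬝ᵥ b = 0 := by
  classical
  constructor
  · rintro ⟨t, rfl⟩ α hα
    rw [dotProduct_mulVec, hα, zero_dotProduct]
  intro h
  suffices b ∈ LinearMap.range A.mulVecLin from this
  rw [← Subspace.dualAnnihilator_dualCoannihilator_eq (W := LinearMap.range A.mulVecLin),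
    Submodule.mem_dualCoannihilator]
  intro φ hφ
  rw [Submodule.mem_dualAnnihilator] at hφ
  have hφα : ∀ v, φ v = (fun a => φ (Pi.single a 1)) ⬝ᵥ v := fun v => by
    rw [LinearMap.pi_apply_eq_sum_univ φ v, dotProduct]
    refine sum_congr rfl fun a _ => ?_
    rw [smul_eq_mul, mul_comm]
    congr 2
    ext j
    simp [Pi.single_apply, eq_comm]
  rw [hφα]
  refine h _ (funext fun j => ?_)
  have := hφ _ (LinearMap.mem_range_self A.mulVecLin (Pi.single j 1))
  rwa [hφα, mulVecLin_apply, dotProduct_mulVec, dotProduct_single_one] at this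

theorem exists_invariant_mulVec_eq_iff [NeZero (2 : K)] {A : Matrix ι κ K} (hσ : Involutive σ)
    (hτ : Involutive τ) (hA : ∀ a j, A (σ a) (τ j) = A a j) {b : ι → K} (hb : b ∘ σ = b) :
    (∃ t, t ∘ τ = t ∧ A *ᵥ t = b) ↔ ∀ α, α ∘ σ = α → α ᵥ* A = 0 → α ⬝ᵥ b = 0 := by
  constructor
  · rintro ⟨t, -, ht⟩ α - hα
    exact (exists_mulVec_eq_iff A b).1 ⟨t, ht⟩ α hα
  intro h
  have hker : ∀ α, α ᵥ* A = 0 → α ⬝ᵥ b = 0 := by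
    intro α hα
    have hsym : (α + α ∘ σ) ∘ σ = α + α ∘ σ := by ext a; simp [hσ a, add_comm]
    have hα' : (α + α ∘ σ) ᵥ* A = 0 := by
      rw [add_vecMul, ← mulVec_transpose, ← mulVec_transpose,
        mulVec_comp_of_involutive hτ hσ (fun j a => hA a j), mulVec_transpose, hα, Pi.zero_comp,
        add_zero]
    have h2 := h _ hsym hα'
    have hreindex : (α ∘ σ) ⬝ᵥ b = α ⬝ᵥ b := by
      conv_lhs => rw [← hb]
      exact hσ.bijective.sum_comp (fun a => α a * b a)
    rw [add_dotProduct, hreindex, ← two_mul] at h2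
    exact (mul_eq_zero.1 h2).resolve_left two_ne_zero
  obtain ⟨t, ht⟩ := (exists_mulVec_eq_iff A b).2 hker
  refine ⟨(2 : K)⁻¹ • (t + t ∘ τ), ?_, ?_⟩
  · ext j
    simp [hτ j, add_comm, mul_add]
  · rw [mulVec_smul, mulVec_add, mulVec_comp_of_involutive hσ hτ hA, ht, hb, ← two_smul K b,
      smul_smul, inv_mul_cancel₀ two_ne_zero, one_smul]

end Matrix

theorem exists_sign_eq_neg_one_zpow_iff {κ : Type*} {τ : κ → κ} {δ : κ → ℤ}
    (hδ : ∀ j, δ (τ j) = δ j) (P : (κ → ℝ) → Prop) :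
    (∃ g : κ → ℝ, (∀ j, g j ≠ 0) ∧ (∀ j, g (τ j) = g j) ∧ (∀ j, sign (g j) = (-1) ^ δ j) ∧ P g) ↔
      ∃ t : κ → ℝ, (∀ j, t (τ j) = t j) ∧ P fun j => (-1) ^ δ j * exp (t j) := by
  constructor
  · rintro ⟨g, hg0, hgτ, hgsign, hP⟩
    refine ⟨fun j => log (g j), fun j => by simp only [hgτ], ?_⟩
    convert hP using 2 with j
    exact neg_one_zpow_mul_exp_log (hg0 j) (hgsign j)
  · rintro ⟨t, htτ, hP⟩
    refine ⟨_, fun j => ?_, fun j => by simp only [hδ, htτ],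
      fun j => sign_neg_one_zpow_mul_exp _ _, hP⟩
    exact mul_ne_zero (zpow_ne_zero _ (by norm_num)) (exp_ne_zero _)

section

variable {ι κ : Type*} [Fintype ι] [Fintype κ] {σ : ι → ι} {τ : κ → κ}

theorem prod_abs_rpow_two_mul {c ε α : ι → ℝ} (hσ : Involutive σ) (hc : ∀ a, c a ≠ 0)
    (hε : ∀ a, |ε a| = 1) (hα : ∀ a, α (σ a) = α a) :
    ∏ a, |c a| ^ (2 * α a) = ∏ a, |c a * (ε a * c (σ a))| ^ α a := by
  have hsplit : ∀ a, |c a * (ε a * c (σ a))| ^ α a = |c a| ^ α a * |c (σ a)| ^ α (σ a) := by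
    intro a
    rw [abs_mul, abs_mul, hε, one_mul, mul_rpow (abs_nonneg _) (abs_nonneg _), hα]
  rw [prod_congr rfl fun a _ => hsplit a, prod_mul_distrib,
    hσ.bijective.prod_comp fun a => |c a| ^ α a, ← prod_mul_distrib]
  refine prod_congr rfl fun a _ => ?_
  rw [two_mul, rpow_add (abs_pos.2 (hc a))]

theorem exists_eq_mul_exp_mulVec_iff (hσ : Involutive σ) (hτ : Involutive τ) {M : Matrix ι κ ℤ}
    (hM : ∀ a j, M (σ a) (τ j) = M a j) {δ : κ → ℤ} (hδ : ∀ j, δ (τ j) = δ j) {C : ι → ℝ}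
    (hC0 : ∀ a, C a ≠ 0) (hCσ : ∀ a, C (σ a) = C a) (X : ι → ℝ) :
    ((∀ a, X (σ a) = X a) ∧ (∀ a, X a ≠ 0) ∧
        (∀ a, sign (X a) * sign (C a) = (-1) ^ (M *ᵥ δ) a) ∧
        ∀ α : ι → ℝ, (∀ j, ∑ a, (M a j : ℝ) * α a = 0) → (∀ a, α (σ a) = α a) →
          ∏ a, |X a| ^ α a = ∏ a, |C a| ^ α a) ↔
      ∃ t : κ → ℝ, (∀ j, t (τ j) = t j) ∧
        X = fun a => C a * ((-1) ^ (M *ᵥ δ) a * exp ((M.map (↑) *ᵥ t) a)) := by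
  set A : Matrix ι κ ℝ := M.map (↑)
  have hA : ∀ a j, A (σ a) (τ j) = A a j := fun a j => by simp [A, hM]
  have hker : ∀ α : ι → ℝ, (∀ j, ∑ a, (M a j : ℝ) * α a = 0) ↔ α ᵥ* A = 0 := fun α => by
    rw [← mulVec_transpose, funext_iff]
    rfl
  have hMδ : ∀ a, (M *ᵥ δ) (σ a) = (M *ᵥ δ) a := fun a => by
    rw [← Function.comp_apply (f := M *ᵥ δ), ← mulVec_comp_of_involutive hσ hτ hM,
      show δ ∘ τ = δ from funext hδ]
  constructor
  · rintro ⟨hXσ, hX0, hXsign, hXP⟩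
    set b : ι → ℝ := fun a => log (X a) - log (C a)
    have hb : b ∘ σ = b := funext fun a => by simp [b, hXσ, hCσ]
    obtain ⟨t, htτ, ht⟩ := (exists_invariant_mulVec_eq_iff hσ hτ hA hb).2 fun α hασ hα => by
      have := hXP α ((hker α).2 hα) (congrFun hασ)
      rw [prod_abs_rpow_eq_exp_dotProduct hX0, prod_abs_rpow_eq_exp_dotProduct hC0] at this
      rw [show b = (fun a => log (X a)) - fun a => log (C a) from rfl, dotProduct_sub,
        exp_injective this, sub_self]
    refine ⟨t, congrFun htτ, funext fun a => ?_⟩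
    refine (eq_mul_neg_one_zpow_mul_exp_iff (hC0 a)).2 ⟨hX0 a, hXsign a, ?_⟩
    rw [ht]
    simp [b]
  · rintro ⟨t, htτ, rfl⟩
    have hY := fun a => (eq_mul_neg_one_zpow_mul_exp_iff (d := (M *ᵥ δ) a)
      (s := (A *ᵥ t) a) (hC0 a)).1 rfl
    refine ⟨fun a => ?_, fun a => (hY a).1, fun a => (hY a).2.1, fun α hα hασ => ?_⟩
    · simp only [hCσ, hMδ]
      rw [← Function.comp_apply (f := A *ᵥ t), ← mulVec_comp_of_involutive hσ hτ hA,
        show t ∘ τ = t from funext htτ]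
    · rw [prod_abs_rpow_eq_exp_dotProduct fun a => (hY a).1,
        prod_abs_rpow_eq_exp_dotProduct hC0]
      simp only [(hY _).2.2]
      rw [show (fun a => log (C a) + (A *ᵥ t) a) = (fun a => log (C a)) + A *ᵥ t from rfl,
        dotProduct_add, dotProduct_mulVec, (hker α).1 hα, zero_dotProduct, add_zero]

end

theorem sigma_diagonal_einstein_criterion_general (m n : ℕ) (M : Matrix (Fin m) (Fin n) ℤ)
    (sn : Fin n → Fin n) (hsn : Function.Involutive sn)
    (sm : Fin m → Fin m) (hsm : Function.Involutive sm)
    (hM : ∀ a j, M (sm a) (sn j) = M a j)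
    (c : Fin m → ℝ) (hc : ∀ a, c a ≠ 0)
    (ε : Fin m → ℝ) (hε : ∀ a, ε a = 1 ∨ ε a = -1) (hεinv : ∀ a, ε (sm a) = ε a)
    (k : ℝ) (δ : Fin n → ℤ)
    (hδinv : ∀ j, δ (sn j) = δ j) :
    (∃ g : Fin n → ℝ, (∀ j, g j ≠ 0) ∧ (∀ j, g (sn j) = g j) ∧
        (∀ j, Real.sign (g j) = (-1 : ℝ) ^ δ j) ∧
        (∀ j', ∑ a, (M a j' : ℝ) *
          (c a * (ε a * c (sm a)) * ∏ j, g j ^ M a j) = k)) ↔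
      (∃ X : Fin m → ℝ, (∀ a, X (sm a) = X a) ∧
        (∀ j, ∑ a, (M a j : ℝ) * X a = k) ∧
        (∀ a, X a ≠ 0) ∧
        (∀ a, Real.sign (X a) * Real.sign (c a) * Real.sign (ε a * c (sm a)) =
          (-1 : ℝ) ^ (∑ j, M a j * δ j)) ∧
        (∀ α : Fin m → ℝ, (∀ j, ∑ a, (M a j : ℝ) * α a = 0) →
          (∀ a, α (sm a) = α a) →
          ∏ a, |X a| ^ α a = ∏ a, |c a| ^ (2 * α a))) := by
  have hεabs : ∀ a, |ε a| = 1 := fun a => by rcases hε a with h | h <;> simp [h]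
  have hC0 : ∀ a, c a * (ε a * c (sm a)) ≠ 0 := fun a =>
    mul_ne_zero (hc a) (mul_ne_zero (abs_pos.1 (by simp [hεabs])) (hc _))
  have hCσ : ∀ a, c (sm a) * (ε (sm a) * c (sm (sm a))) = c a * (ε a * c (sm a)) := fun a => by
    rw [hsm a, hεinv a]
    ring
  have hX := exists_eq_mul_exp_mulVec_iff hsm hsn hM hδinv hC0 hCσ
  rw [exists_sign_eq_neg_one_zpow_iff hδinv]
  simp only [prod_neg_one_zpow_mul_exp_zpow]
  constructor
  · rintro ⟨t, ht, hK⟩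
    obtain ⟨hXσ, hX0, hXsign, hXP⟩ := (hX _).2 ⟨t, ht, rfl⟩
    refine ⟨_, hXσ, hK, hX0, fun a => ?_, fun α hα hασ => ?_⟩
    · rw [mul_assoc, ← sign_mul]
      exact hXsign a
    · rw [prod_abs_rpow_two_mul hsm hc hεabs hασ]
      exact hXP α hα hασ
  · rintro ⟨X, hXσ, hK, hX0, hXsign, hXP⟩
    obtain ⟨t, ht, rfl⟩ := (hX X).1 ⟨hXσ, hX0,
      fun a => by rw [sign_mul, ← mul_assoc]; exact hXsign a,
      fun α hα hασ => by rw [← prod_abs_rpow_two_mul hsm hc hεabs hασ]; exact hXP α hα hασ⟩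
    exact ⟨t, ht, hK⟩

/-- Criterion for existence of a σ-diagonal Einstein metric on a nice nilpotent Lie algebra,
in terms of the root matrix `M`, the involutions `sn` (on nodes) and `sm` (on arrows),
structure constants `c`, permuted structure constants `a ↦ ε a * c (sm a)`,
cosmological constant `k` and coefficient signs `δ`. -/
theorem sigma_diagonal_einstein_criterion (m n : ℕ) (M : Matrix (Fin m) (Fin n) ℤ)
    (sn : Fin n → Fin n) (hsn : Function.Involutive sn)
    (sm : Fin m → Fin m) (hsm : Function.Involutive sm)
    (hM : ∀ a j, M (sm a) (sn j) = M a j)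
    (c : Fin m → ℝ) (hc : ∀ a, c a ≠ 0)
    (ε : Fin m → ℝ) (hε : ∀ a, ε a = 1 ∨ ε a = -1) (hεinv : ∀ a, ε (sm a) = ε a)
    (k : ℝ) (δ : Fin n → ℤ) (hδ : ∀ j, δ j = 0 ∨ δ j = 1)
    (hδinv : ∀ j, δ (sn j) = δ j) :
    (∃ g : Fin n → ℝ, (∀ j, g j ≠ 0) ∧ (∀ j, g (sn j) = g j) ∧
        (∀ j, Real.sign (g j) = (-1 : ℝ) ^ δ j) ∧
        (∀ j', ∑ a, (M a j' : ℝ) *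
          (c a * (ε a * c (sm a)) * ∏ j, g j ^ M a j) = k)) ↔
      (∃ X : Fin m → ℝ, (∀ a, X (sm a) = X a) ∧
        (∀ j, ∑ a, (M a j : ℝ) * X a = k) ∧
        (∀ a, X a ≠ 0) ∧
        (∀ a, Real.sign (X a) * Real.sign (c a) * Real.sign (ε a * c (sm a)) =
          (-1 : ℝ) ^ (∑ j, M a j * δ j)) ∧
        (∀ α : Fin m → ℝ, (∀ j, ∑ a, (M a j : ℝ) * α a = 0) →
          (∀ a, α (sm a) = α a) →
          ∏ a, |X a| ^ α a = ∏ a, |c a| ^ (2 * α a))) :=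
  sigma_diagonal_einstein_criterion_general m n M sn hsn sm hsm hM c hc ε hε hεinv k δ hδinv
end

section
/- Let 𝔤 be a nonabelian real nilpotent Lie algebra of nilpotency class 2 (that is, [[𝔤,𝔤],𝔤] = 0) admitting a nice basis (e_1,…,e_n), and let ⟨·,·⟩ be a metric on 𝔤 for which this basis is orthogonal. Then ⟨·,·⟩ is not ad-invariant: there exist x, y, z ∈ 𝔤 with ⟨[x,y],z⟩ + ⟨y,[x,z]⟩ ≠ 0. -/
/-!
If `⁅e i, e j⁆ = a • e k` with `a ≠ 0`, then `e k` is central by the 2-step condition, so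
ad-invariance gives `B ⁅e i, e j⁆ (e k) = -B (e j) ⁅e i, e k⁆ = 0`, i.e. `a • B (e k) (e k) = 0`.
But a nondegenerate form has no isotropic vector in an orthogonal basis.
-/

/-- A basis of a real Lie algebra is nice if every bracket of two basis vectors is a
multiple of a basis vector, and for all `i, k` there is at most one `j` such that the
coefficient of `e k` in `⁅e i, e j⁆` is nonzero. -/
def IsNiceBasis {L : Type} [LieRing L] [LieAlgebra ℝ L] {ι : Type}
    (e : Module.Basis ι ℝ L) : Prop :=
  (∀ i j, ∃ (k : ι) (a : ℝ), ⁅e i, e j⁆ = a • e k) ∧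
  (∀ i k j j', e.repr ⁅e i, e j⁆ k ≠ 0 → e.repr ⁅e i, e j'⁆ k ≠ 0 → j = j')

theorem Module.Basis.exists_lie_ne_zero {R L ι : Type*} [CommRing R] [LieRing L]
    [LieAlgebra R L] (e : Module.Basis ι R L) {x y : L} (hxy : ⁅x, y⁆ ≠ 0) :
    ∃ i j, ⁅e i, e j⁆ ≠ 0 := by
  by_contra! h
  have hbracket : (LieModule.toEnd R L L : L →ₗ[R] L →ₗ[R] L) = 0 :=
    LinearMap.ext_basis e e h
  exact hxy (by simpa using LinearMap.congr_fun₂ hbracket x y)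

theorem LinearMap.BilinForm.lie_self_eq_zero_of_lie_lie_eq_zero {R L : Type*} [CommRing R]
    [LieRing L] [LieAlgebra R L] {B : LinearMap.BilinForm R L}
    (hB : ∀ x y z : L, B ⁅x, y⁆ z + B y ⁅x, z⁆ = 0) {x y : L} (hx : ⁅x, ⁅x, y⁆⁆ = 0) :
    B ⁅x, y⁆ ⁅x, y⁆ = 0 := by
  simpa [hx] using hB x y ⁅x, y⁆

theorem diagonal_metric_not_ad_invariant_general {L : Type} [LieRing L] [LieAlgebra ℝ L]
    (hnonab : ∃ x y : L, ⁅x, y⁆ ≠ 0)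
    (h2step : ∀ x y z : L, ⁅⁅x, y⁆, z⁆ = 0) {n : ℕ}
    (e : Module.Basis (Fin n) ℝ L) (he : IsNiceBasis e)
    (B : LinearMap.BilinForm ℝ L)
    (hnondeg : ∀ x, (∀ y, B x y = 0) → x = 0)
    (horth : ∀ i j : Fin n, i ≠ j → B (e i) (e j) = 0) :
    ∃ x y z : L, B ⁅x, y⁆ z + B y ⁅x, z⁆ ≠ 0 := by
  by_contra! hinv
  obtain ⟨x, y, hxy⟩ := hnonab
  obtain ⟨i, j, hij⟩ := e.exists_lie_ne_zero hxy
  obtain ⟨k, a, hk⟩ := he.1 i j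
  have ha : a ≠ 0 := by
    rintro rfl
    exact hij (by rw [hk, zero_smul])
  have hcentral : ⁅e i, ⁅e i, e j⁆⁆ = 0 := by rw [← lie_skew, h2step, neg_zero]
  have hiso := B.lie_self_eq_zero_of_lie_lie_eq_zero hinv hcentral
  rw [hk] at hiso
  simp only [map_smul, LinearMap.smul_apply, smul_eq_mul, mul_eq_zero, ha, false_or] at hiso
  exact LinearMap.IsOrthoᵢ.not_isOrtho_basis_self_of_separatingLeft
    (fun i j hij => horth i j hij) hnondeg k hiso

/-- On a nonabelian 2-step nilpotent Lie algebra with a nice basis, no diagonal metric is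
ad-invariant. -/
theorem diagonal_metric_not_ad_invariant {L : Type} [LieRing L] [LieAlgebra ℝ L]
    (hnonab : ∃ x y : L, ⁅x, y⁆ ≠ 0)
    (h2step : ∀ x y z : L, ⁅⁅x, y⁆, z⁆ = 0) {n : ℕ}
    (e : Module.Basis (Fin n) ℝ L) (he : IsNiceBasis e)
    (B : LinearMap.BilinForm ℝ L)
    (hsymm : ∀ x y, B x y = B y x)
    (hnondeg : ∀ x, (∀ y, B x y = 0) → x = 0)
    (horth : ∀ i j : Fin n, i ≠ j → B (e i) (e j) = 0) :
    ∃ x y z : L, B ⁅x, y⁆ z + B y ⁅x, z⁆ ≠ 0 :=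
  diagonal_metric_not_ad_invariant_general hnonab h2step e he B hnondeg horth
end
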